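/- Assume d ≥ 2. For every δ > 0, ‖g(δ) − c · v₁‖ ≤ 3·q(δ). -/

import Mathlib

/-!
Write `g = ∇S(x_t)`. Since `∇S` is `L`-Lipschitz and `S(x_t) = 0`, the descent lemma gives
`|S(x_t + δu) - δ⟪g, u⟫| ≤ Lδ²/2` for unit `u`, so `sign S(x_t + δu) = sign ⟪g, u⟫` outside the
band `|⟪g, u⟫| ≤ Lδ/2`, which has `σ`-mass `q(δ)`; on the band the two integrands differ by at
most `2`. It remains to see `∫ sign⟪v₁, u⟫ u dσ = c v₁`: `σ` is invariant under the reflection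
fixing the line `ℝ v₁`, and `u` plus its reflection is `2⟪v₁, u⟫ v₁`.
-/

open MeasureTheory Metric Filter
open scoped RealInnerProductSpace ENNReal

/-- sign(t) = 1 if t > 0 and -1 otherwise. -/
noncomputable def sgn (t : ℝ) : ℝ := if 0 < t then 1 else -1

/-- The uniform probability measure on the unit sphere of `EuclideanSpace ℝ (Fin d)`:
the (d-1)-dimensional Hausdorff measure restricted to the sphere, normalized to mass 1. -/
noncomputable def sphereUniform (d : ℕ) : Measure (EuclideanSpace ℝ (Fin d)) :=
  (μH[(d : ℝ) - 1] (Metric.sphere (0 : EuclideanSpace ℝ (Fin d)) 1))⁻¹ •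
    (μH[(d : ℝ) - 1]).restrict (Metric.sphere (0 : EuclideanSpace ℝ (Fin d)) 1)

/-- The population gradient-direction estimate
`g(δ) = ∫_S sign(S (x_t + δ u)) · u dσ(u)`. -/
noncomputable def gEst (d : ℕ) (S : EuclideanSpace ℝ (Fin d) → ℝ)
    (xt : EuclideanSpace ℝ (Fin d)) (δ : ℝ) : EuclideanSpace ℝ (Fin d) :=
  ∫ u, sgn (S (xt + δ • u)) • u ∂(sphereUniform d)

section Sign

lemma measurable_sgn : Measurable sgn :=
  Measurable.ite measurableSet_Ioi measurable_const measurable_const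

lemma abs_sgn_le_one (t : ℝ) : |sgn t| ≤ 1 := by
  unfold sgn; split_ifs <;> simp

lemma abs_sgn_sub_sgn_le_two (s t : ℝ) : |sgn s - sgn t| ≤ 2 := by
  unfold sgn; split_ifs <;> norm_num

lemma sgn_mul_self (t : ℝ) : sgn t * t = |t| := by
  unfold sgn
  split_ifs with h
  · rw [one_mul, abs_of_pos h]
  · rw [neg_one_mul, abs_of_nonpos (not_lt.mp h)]

lemma sgn_mul_of_pos {a : ℝ} (ha : 0 < a) (t : ℝ) : sgn (a * t) = sgn t := by
  simp only [sgn, mul_pos_iff_of_pos_left ha]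

lemma sgn_eq_of_abs_sub_lt {a b : ℝ} (h : |a - b| < |b|) : sgn a = sgn b := by
  unfold sgn
  split_ifs <;> cases abs_cases b <;> cases abs_cases (a - b) <;> linarith

end Sign

section Taylor

variable {E : Type*} [NormedAddCommGroup E] [InnerProductSpace ℝ E] [CompleteSpace E]
  {S : E → ℝ} {L : ℝ}

lemma hasDerivAt_comp_add_smul (hS : Differentiable ℝ S) (x v : E) (t : ℝ) :
    HasDerivAt (fun t : ℝ => S (x + t • v)) ⟪gradient S (x + t • v), v⟫ t := by
  have hline : HasDerivAt (fun t : ℝ => x + t • v) v t := by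
    simpa using ((hasDerivAt_id t).smul_const v).const_add x
  have := (hS _).hasGradientAt.hasFDerivAt.comp_hasDerivAt t hline
  rwa [InnerProductSpace.toDual_apply_apply] at this

lemma abs_sub_sub_inner_gradient_le (hS : Differentiable ℝ S)
    (hLip : ∀ x y : E, ‖gradient S x - gradient S y‖ ≤ L * ‖x - y‖) (x y : E) :
    |S y - S x - ⟪gradient S x, y - x⟫| ≤ L / 2 * ‖y - x‖ ^ 2 := by
  set v := y - x
  have hf : ∀ t, HasDerivAt (fun t : ℝ => S (x + t • v) - S x - t * ⟪gradient S x, v⟫)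
      ⟪gradient S (x + t • v) - gradient S x, v⟫ t := fun t => by
    refine (((hasDerivAt_comp_add_smul hS x v t).sub_const (S x)).sub
      ((hasDerivAt_id t).mul_const ⟪gradient S x, v⟫)).congr_deriv ?_
    rw [inner_sub_left, one_mul]
  have hB : ∀ t, HasDerivAt (fun t : ℝ => L / 2 * ‖v‖ ^ 2 * t ^ 2) (L * ‖v‖ ^ 2 * t) t :=
    fun t => ((hasDerivAt_pow 2 t).const_mul (L / 2 * ‖v‖ ^ 2)).congr_deriv (by norm_num; ring)
  have bound : ∀ t ∈ Set.Ico (0 : ℝ) 1,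
      ‖⟪gradient S (x + t • v) - gradient S x, v⟫‖ ≤ L * ‖v‖ ^ 2 * t := fun t ht => by
    calc ‖⟪gradient S (x + t • v) - gradient S x, v⟫‖
        ≤ ‖gradient S (x + t • v) - gradient S x‖ * ‖v‖ := norm_inner_le_norm _ _
      _ ≤ L * ‖x + t • v - x‖ * ‖v‖ := by gcongr; exact hLip _ _
      _ = L * ‖v‖ ^ 2 * t := by
        rw [add_sub_cancel_left, norm_smul, Real.norm_eq_abs, abs_of_nonneg ht.1]; ring
  have := image_norm_le_of_norm_deriv_right_le_deriv_boundary
    (fun t _ => (hf t).continuousAt.continuousWithinAt) (fun t _ => (hf t).hasDerivWithinAt)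
    (by simp) hB bound (Set.right_mem_Icc.mpr zero_le_one)
  simpa [v] using this

lemma sgn_add_smul_eq_sgn_inner_gradient (hS : Differentiable ℝ S)
    (hLip : ∀ x y : E, ‖gradient S x - gradient S y‖ ≤ L * ‖x - y‖) {x u : E} (hx : S x = 0)
    (hu : ‖u‖ = 1) {δ : ℝ} (hδ : 0 < δ) (hlarge : L * δ / 2 < |⟪gradient S x, u⟫|) :
    sgn (S (x + δ • u)) = sgn ⟪gradient S x, u⟫ := by
  have htaylor := abs_sub_sub_inner_gradient_le hS hLip x (x + δ • u)
  rw [hx, add_sub_cancel_left, real_inner_smul_right, norm_smul, Real.norm_eq_abs,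
    abs_of_pos hδ, hu, sub_zero] at htaylor
  rw [← sgn_mul_of_pos hδ ⟪gradient S x, u⟫]
  refine sgn_eq_of_abs_sub_lt (htaylor.trans_lt ?_)
  rw [abs_mul, abs_of_pos hδ]
  nlinarith

end Taylor

section Reflection

variable {E : Type*} [NormedAddCommGroup E] [InnerProductSpace ℝ E] {v : E}

lemma add_reflection_span_singleton (hv : ‖v‖ = 1) (u : E) :
    u + (ℝ ∙ v).reflection u = (2 * ⟪v, u⟫) • v := by
  rw [Submodule.reflection_singleton_apply]
  simp [hv, two_smul, two_mul, add_smul]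

lemma inner_reflection_span_singleton (u : E) : ⟪v, (ℝ ∙ v).reflection u⟫ = ⟪v, u⟫ := by
  have hfix : (ℝ ∙ v).reflection v = v :=
    (Submodule.reflection_eq_self_iff v).mpr (Submodule.mem_span_singleton_self v)
  have := (ℝ ∙ v).reflection.inner_map_map v u
  rwa [hfix] at this

variable [CompleteSpace E] [MeasurableSpace E] [BorelSpace E] {μ : Measure E}

lemma integral_sgn_inner_smul_self (hv : ‖v‖ = 1)
    (hR : MeasurePreserving (ℝ ∙ v).reflection μ μ) (hμ : Integrable (fun u => u) μ) :
    ∫ u, sgn ⟪v, u⟫ • u ∂μ = (∫ u, |⟪v, u⟫| ∂μ) • v := by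
  set G : E → E := fun u => sgn ⟪v, u⟫ • u
  have hG : Integrable G μ :=
    hμ.bdd_smul 1
      (measurable_sgn.comp (continuous_const.inner continuous_id).measurable).aestronglyMeasurable
      (ae_of_all _ fun _ => abs_sgn_le_one _)
  have hGR : ∫ u, G ((ℝ ∙ v).reflection u) ∂μ = ∫ u, G u ∂μ :=
    hR.integral_comp (ℝ ∙ v).reflection.toHomeomorph.measurableEmbedding G
  have hsum : ∀ u, G u + G ((ℝ ∙ v).reflection u) = (2 * |⟪v, u⟫|) • v := fun u => by
    simp only [G, inner_reflection_span_singleton, ← smul_add, add_reflection_span_singleton hv,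
      smul_smul]
    rw [mul_left_comm, sgn_mul_self]
  have h2 : (2 : ℝ) • ∫ u, G u ∂μ = (2 : ℝ) • ((∫ u, |⟪v, u⟫| ∂μ) • v) := by
    calc (2 : ℝ) • ∫ u, G u ∂μ = ∫ u, (G u + G ((ℝ ∙ v).reflection u)) ∂μ := by
          have hGR' : Integrable (fun u => G ((ℝ ∙ v).reflection u)) μ :=
            hR.integrable_comp_of_integrable hG
          rw [integral_add hG hGR', hGR, two_smul]
      _ = ∫ u, (2 * |⟪v, u⟫|) • v ∂μ := by simp_rw [hsum]
      _ = (2 : ℝ) • ((∫ u, |⟪v, u⟫| ∂μ) • v) := by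
          rw [integral_smul_const, integral_const_mul, smul_smul]
  exact smul_right_injective E two_ne_zero h2

end Reflection

section SphereUniform

variable {d : ℕ}

instance isFiniteMeasure_sphereUniform : IsFiniteMeasure (sphereUniform d) := by
  constructor
  simp only [sphereUniform, Measure.smul_apply, Measure.restrict_apply_univ, smul_eq_mul]
  exact (ENNReal.inv_mul_le_one _).trans_lt ENNReal.one_lt_top

lemma ae_norm_eq_one_sphereUniform : ∀ᵐ u ∂sphereUniform d, ‖u‖ = 1 := by
  unfold sphereUniform
  have := ae_restrict_mem (μ := μH[(d : ℝ) - 1])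
    (isClosed_sphere (x := (0 : EuclideanSpace ℝ (Fin d))) (ε := 1)).measurableSet
  exact (Measure.ae_smul_measure this (_ : ℝ≥0∞)).mono fun u hu => by simpa using hu

lemma integrable_id_sphereUniform : Integrable (fun u => u) (sphereUniform d) :=
  .of_bound aestronglyMeasurable_id 1 (ae_norm_eq_one_sphereUniform.mono fun _ hu => hu.le)

lemma measurePreserving_sphereUniform
    (R : EuclideanSpace ℝ (Fin d) ≃ₗᵢ[ℝ] EuclideanSpace ℝ (Fin d)) :
    MeasurePreserving R (sphereUniform d) (sphereUniform d) := by
  have hR := (R.toIsometryEquiv.measurePreserving_hausdorffMeasure ((d : ℝ) - 1)).restrict_preimage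
    (isClosed_sphere (x := 0) (ε := 1)).measurableSet
  have hpre : R.toIsometryEquiv ⁻¹' sphere 0 1 = sphere 0 1 := by ext; simp
  rw [hpre] at hR
  exact hR.smul_measure _

lemma norm_integral_smul_self_le {f : EuclideanSpace ℝ (Fin d) → ℝ}
    {A : Set (EuclideanSpace ℝ (Fin d))} {C : ℝ} (hA : MeasurableSet A) (hf : ∀ u, |f u| ≤ C)
    (hfA : ∀ u, ‖u‖ = 1 → u ∉ A → f u = 0) :
    ‖∫ u, f u • u ∂sphereUniform d‖ ≤ C * (sphereUniform d).real A := by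
  calc ‖∫ u, f u • u ∂sphereUniform d‖
      ≤ ∫ u, A.indicator (fun _ => C) u ∂sphereUniform d := by
        refine norm_integral_le_of_norm_le ((integrable_const C).indicator hA) ?_
        filter_upwards [ae_norm_eq_one_sphereUniform] with u hu
        by_cases huA : u ∈ A
        · rw [Set.indicator_of_mem huA, norm_smul, hu, mul_one, Real.norm_eq_abs]
          exact hf u
        · rw [Set.indicator_of_notMem huA, hfA u hu huA, zero_smul, norm_zero]
    _ = C * (sphereUniform d).real A := by
        rw [integral_indicator_const C hA, smul_eq_mul, mul_comm]

end SphereUniform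

theorem stmt_3_general (d : ℕ) (L : ℝ)
    (S : EuclideanSpace ℝ (Fin d) → ℝ) (hS : Differentiable ℝ S)
    (hLip : ∀ x y : EuclideanSpace ℝ (Fin d),
      ‖gradient S x - gradient S y‖ ≤ L * ‖x - y‖)
    (xt : EuclideanSpace ℝ (Fin d)) (hxt : S xt = 0) (hgrad : gradient S xt ≠ 0)
    (v₁ : EuclideanSpace ℝ (Fin d)) (hv₁ : v₁ = ‖gradient S xt‖⁻¹ • gradient S xt)
    (c : ℝ) (hc : c = ∫ u, |⟪v₁, u⟫| ∂(sphereUniform d))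
    (q : ℝ → ℝ)
    (hq : ∀ δ : ℝ, q δ =
      ((sphereUniform d) {u | |⟪gradient S xt, u⟫| ≤ L * δ / 2}).toReal)
    (δ : ℝ) (hδ : 0 < δ) :
    ‖gEst d S xt δ - c • v₁‖ ≤ 3 * q δ := by
  have hv₁_norm : ‖v₁‖ = 1 := by
    rw [hv₁, norm_smul, norm_inv, norm_norm, inv_mul_cancel₀ (norm_ne_zero_iff.mpr hgrad)]
  have hsgn_v₁ : ∀ u, sgn ⟪gradient S xt, u⟫ = sgn ⟪v₁, u⟫ := fun u => by
    rw [hv₁, real_inner_smul_left, sgn_mul_of_pos (inv_pos.mpr (norm_pos_iff.mpr hgrad))]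
  have hcenter : ∫ u, sgn ⟪v₁, u⟫ • u ∂sphereUniform d = c • v₁ := by
    rw [hc]
    exact integral_sgn_inner_smul_self hv₁_norm (measurePreserving_sphereUniform _)
      integrable_id_sphereUniform
  have hint : ∀ f : EuclideanSpace ℝ (Fin d) → ℝ, Continuous f →
      Integrable (fun u => sgn (f u) • u) (sphereUniform d) := fun f hf =>
    integrable_id_sphereUniform.bdd_smul 1
      (measurable_sgn.comp hf.measurable).aestronglyMeasurable
      (ae_of_all _ fun _ => abs_sgn_le_one _)
  have hA : MeasurableSet {u | |⟪gradient S xt, u⟫| ≤ L * δ / 2} :=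
    measurableSet_le (continuous_const.inner continuous_id).abs.measurable measurable_const
  have hS_line : Continuous fun u => S (xt + δ • u) := hS.continuous.comp (by fun_prop)
  rw [gEst, ← hcenter, ← integral_sub (hint _ hS_line) (hint _ (by fun_prop)), hq,
    ← measureReal_def]
  simp_rw [← sub_smul]
  calc _ ≤ 2 * (sphereUniform d).real {u | |⟪gradient S xt, u⟫| ≤ L * δ / 2} :=
        norm_integral_smul_self_le hA (fun _ => abs_sgn_sub_sgn_le_two _ _)
          (fun u hu hu_band => by
            rw [sgn_add_smul_eq_sgn_inner_gradient hS hLip hxt hu hδ (not_le.mp hu_band),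
              hsgn_v₁, sub_self])
    _ ≤ 3 * _ := mul_le_mul_of_nonneg_right (by norm_num) measureReal_nonneg

/-- For `d ≥ 2` and every `δ > 0`, `‖g(δ) − c·v₁‖ ≤ 3·q(δ)`. -/
theorem stmt_3 (d : ℕ) (hd : 2 ≤ d) (L : ℝ) (hL : 0 < L)
    (S : EuclideanSpace ℝ (Fin d) → ℝ) (hS : Differentiable ℝ S)
    (hLip : ∀ x y : EuclideanSpace ℝ (Fin d),
      ‖gradient S x - gradient S y‖ ≤ L * ‖x - y‖)
    (xt : EuclideanSpace ℝ (Fin d)) (hxt : S xt = 0) (hgrad : gradient S xt ≠ 0)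
    (v₁ : EuclideanSpace ℝ (Fin d)) (hv₁ : v₁ = ‖gradient S xt‖⁻¹ • gradient S xt)
    (c : ℝ) (hc : c = ∫ u, |⟪v₁, u⟫| ∂(sphereUniform d))
    (q : ℝ → ℝ)
    (hq : ∀ δ : ℝ, q δ =
      ((sphereUniform d) {u | |⟪gradient S xt, u⟫| ≤ L * δ / 2}).toReal)
    (δ : ℝ) (hδ : 0 < δ) :
    ‖gEst d S xt δ - c • v₁‖ ≤ 3 * q δ :=
  stmt_3_general d L S hS hLip xt hxt hgrad v₁ hv₁ c hc q hq δ hδ
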